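/- Let (u_p, u_e) be a solution of the bulk system, positive on an interval [0, R₁), with F u_p(0)^{3/2} − E u_e(0)^{3/2} < 0 and B u_e(0)^{3/2} − A u_p(0)^{3/2} < 0. If u_p'(R₀) > 0 for some R₀ ∈ (0, R₁), then u_p'(r) ≥ 0 and u_e'(r) ≤ 0 for all r ∈ [R₀, R₁); symmetrically, if u_e'(R₀) > 0 then u_e'(r) ≥ 0 and u_p'(r) ≤ 0 for all r ∈ [R₀, R₁). In particular, both densities cannot be simultaneously increasing. -/

import Mathlib

open Set Filter

noncomputable section

/-- `(u_p, u_e)` is a solution of the bulk system on the set `s ⊆ [0,∞)` (which should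
contain `0`): both functions are `C²` on `s`, satisfy the initial conditions
`u_p(0) = α`, `u_e(0) = β`, `u_p'(0) = u_e'(0) = 0`, are positive on `s`, and satisfy
`u_p'' + (2/r) u_p' = F u_p^{3/2} − E u_e^{3/2}`,
`u_e'' + (2/r) u_e' = B u_e^{3/2} − A u_p^{3/2}` at every `r ∈ s` with `r > 0`. -/
def IsBulkSolOn (A B E F α β : ℝ) (s : Set ℝ) (up ue : ℝ → ℝ) : Prop :=
  ContDiffOn ℝ 2 up s ∧ ContDiffOn ℝ 2 ue s ∧
  up 0 = α ∧ ue 0 = β ∧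
  derivWithin up s 0 = 0 ∧ derivWithin ue s 0 = 0 ∧
  (∀ r ∈ s, 0 < r →
    derivWithin (derivWithin up s) s r + 2 / r * derivWithin up s r
      = F * up r ^ ((3:ℝ)/2) - E * ue r ^ ((3:ℝ)/2) ∧
    derivWithin (derivWithin ue s) s r + 2 / r * derivWithin ue s r
      = B * ue r ^ ((3:ℝ)/2) - A * up r ^ ((3:ℝ)/2)) ∧
  (∀ r ∈ s, 0 < up r ∧ 0 < ue r)

/-! Write `p = u_p'`, `e = u_e'`, `φ = F u_p^{3/2} − E u_e^{3/2}`. The radial equation says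
`(r² p)' = r² φ`, and similarly `(r² e)' = r² (B u_e^{3/2} − A u_p^{3/2})`; hence
`(A r² p + F r² e)' = (B F − E A) r² u_e^{3/2} < 0`; as `A r² p + F r² e` vanishes at `0`,
it is negative for `r > 0`, so wherever `p ≥ 0` we get `e < 0`.

Let `(a, b)` be a maximal interval around `R₀` on which `p > 0`, where `p(a) ≤ 0` (using
`p(0) = 0`) and, if the claim failed, `p(b) ≤ 0`. On it `u_p` increases and `u_e`
decreases, so `φ` is nondecreasing; thus `(r² p)'` changes sign at most once, from `−` to `+`,
and `r² p` is bounded on `[a, b]` by its nonpositive values at the endpoints, contradicting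
`p(R₀) > 0`. The statement for `u_e` is the same one for the system with the roles of
`(u_p, A, F)` and `(u_e, E, B)` exchanged. -/

theorem le_max_of_hasDerivAt_mul_of_monotoneOn {f w g : ℝ → ℝ} {a b x : ℝ}
    (hx : x ∈ Icc a b) (hf : ContinuousOn f (Icc a b))
    (hf' : ∀ t ∈ Ioo a b, HasDerivAt f (w t * g t) t) (hw : ∀ t ∈ Ioo a b, 0 < w t)
    (hg : MonotoneOn g (Ioo a b)) : f x ≤ max (f a) (f b) := by
  by_contra! hlt
  obtain ⟨hfa, hfb⟩ := max_lt_iff.mp hlt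
  have hax : a < x := hx.1.lt_of_ne (by rintro rfl; exact hfa.false)
  have hxb : x < b := hx.2.lt_of_ne (by rintro rfl; exact hfb.false)
  obtain ⟨ξ, hξ, hslope⟩ := exists_hasDerivAt_eq_slope f (fun t => w t * g t) hax
    (hf.mono (Icc_subset_Icc_right hxb.le))
    (fun t ht => hf' t ⟨ht.1, ht.2.trans hxb⟩)
  obtain ⟨η, hη, hslope'⟩ := exists_hasDerivAt_eq_slope f (fun t => w t * g t) hxb
    (hf.mono (Icc_subset_Icc_left hax.le))
    (fun t ht => hf' t ⟨hax.trans ht.1, ht.2⟩)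
  have hξ' : ξ ∈ Ioo a b := ⟨hξ.1, hξ.2.trans hxb⟩
  have hη' : η ∈ Ioo a b := ⟨hax.trans hη.1, hη.2⟩
  have hgξ : 0 < g ξ := pos_of_mul_pos_right
    (hslope.trans_gt (div_pos (sub_pos.2 hfa) (sub_pos.2 hax))) (hw ξ hξ').le
  have hgη : g η < 0 := neg_of_mul_neg_right
    (hslope'.trans_lt (div_neg_of_neg_of_pos (sub_neg.2 hfb) (sub_pos.2 hxb))) (hw η hη').le
  exact (hgξ.trans_le (hg hξ' hη' (hξ.2.trans hη.1).le)).not_gt hgη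

theorem exists_nonpos_forall_pos_Ioc {p : ℝ → ℝ} {a c : ℝ} (hac : a ≤ c)
    (hp : ContinuousOn p (Icc a c)) (ha : p a ≤ 0) (hc : 0 < p c) :
    ∃ t ∈ Ico a c, p t ≤ 0 ∧ ∀ x ∈ Ioc t c, 0 < p x := by
  obtain ⟨t, ⟨htac, ht⟩, hmax⟩ := (isCompact_Icc.of_isClosed_subset
    (hp.preimage_isClosed_of_isClosed isClosed_Icc (isClosed_Iic (a := 0))) inter_subset_left
    ).exists_isGreatest ⟨a, ⟨le_rfl, hac⟩, ha⟩
  have htc : t ≠ c := by rintro rfl; exact (hc.trans_le ht).false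
  refine ⟨t, ⟨htac.1, htac.2.lt_of_ne htc⟩, ht, ?_⟩
  intro x hx
  by_contra! hpx
  exact (hmax ⟨⟨htac.1.trans hx.1.le, hx.2⟩, hpx⟩).not_gt hx.1

theorem exists_nonpos_forall_pos_Ico {p : ℝ → ℝ} {c b : ℝ} (hcb : c ≤ b)
    (hp : ContinuousOn p (Icc c b)) (hc : 0 < p c) (hb : p b ≤ 0) :
    ∃ t ∈ Ioc c b, p t ≤ 0 ∧ ∀ x ∈ Ico c t, 0 < p x := by
  obtain ⟨t, ⟨htcb, ht⟩, hmin⟩ := (isCompact_Icc.of_isClosed_subset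
    (hp.preimage_isClosed_of_isClosed isClosed_Icc (isClosed_Iic (a := 0))) inter_subset_left
    ).exists_isLeast ⟨b, ⟨hcb, le_rfl⟩, hb⟩
  have hct : c ≠ t := by rintro rfl; exact (hc.trans_le ht).false
  refine ⟨t, ⟨htcb.1.lt_of_ne hct, htcb.2⟩, ht, ?_⟩
  intro x hx
  by_contra! hpx
  exact (hmin ⟨⟨hx.1, hx.2.le.trans htcb.2⟩, hpx⟩).not_gt hx.2

namespace IsBulkSolOn

variable {A B E F α β R : ℝ} {up ue : ℝ → ℝ}

theorem swap {s : Set ℝ} (h : IsBulkSolOn A B E F α β s up ue) :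
    IsBulkSolOn E F A B β α s ue up := by
  obtain ⟨hup, hue, hα, hβ, hp0, he0, hode, hpos⟩ := h
  exact ⟨hue, hup, hβ, hα, he0, hp0, fun r hr hr0 => (hode r hr hr0).symm,
    fun r hr => (hpos r hr).symm⟩

theorem pos {s : Set ℝ} (h : IsBulkSolOn A B E F α β s up ue) {r : ℝ} (hr : r ∈ s) :
    0 < up r ∧ 0 < ue r :=
  h.2.2.2.2.2.2.2 r hr

theorem contDiffOn_derivWithin (h : IsBulkSolOn A B E F α β (Ico 0 R) up ue) :
    ContDiffOn ℝ 1 (derivWithin up (Ico 0 R)) (Ico 0 R) :=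
  h.1.derivWithin (uniqueDiffOn_Ico 0 R) (by norm_num)

theorem hasDerivAt (h : IsBulkSolOn A B E F α β (Ico 0 R) up ue) {r : ℝ} (hr : r ∈ Ioo 0 R) :
    HasDerivAt up (derivWithin up (Ico 0 R) r) r :=
  ((h.1.differentiableOn two_ne_zero r (Ioo_subset_Ico_self hr)).hasDerivWithinAt).hasDerivAt
    (Ico_mem_nhds hr.1 hr.2)

theorem hasDerivAt_sq_mul_derivWithin (h : IsBulkSolOn A B E F α β (Ico 0 R) up ue) {r : ℝ}
    (hr : r ∈ Ioo 0 R) :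
    HasDerivAt (fun t => t ^ 2 * derivWithin up (Ico 0 R) t)
      (r ^ 2 * (F * up r ^ ((3:ℝ)/2) - E * ue r ^ ((3:ℝ)/2))) r := by
  have hp : HasDerivAt (derivWithin up (Ico 0 R))
      (derivWithin (derivWithin up (Ico 0 R)) (Ico 0 R) r) r :=
    ((h.contDiffOn_derivWithin.differentiableOn one_ne_zero r
      (Ioo_subset_Ico_self hr)).hasDerivWithinAt).hasDerivAt (Ico_mem_nhds hr.1 hr.2)
  refine ((hasDerivAt_pow 2 r).mul hp).congr_deriv ?_
  rw [← (h.2.2.2.2.2.2.1 r (Ioo_subset_Ico_self hr) hr.1).1]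
  field_simp [hr.1.ne']
  ring

theorem weighted_sq_mul_derivWithin_neg (h : IsBulkSolOn A B E F α β (Ico 0 R) up ue)
    (hBFEA : B * F < E * A) {r : ℝ} (hr : r ∈ Ioo 0 R) :
    A * (r ^ 2 * derivWithin up (Ico 0 R) r) + F * (r ^ 2 * derivWithin ue (Ico 0 R) r) < 0 := by
  set Z : ℝ → ℝ := fun t =>
    A * (t ^ 2 * derivWithin up (Ico 0 R) t) + F * (t ^ 2 * derivWithin ue (Ico 0 R) t)
  have hZ : StrictAntiOn Z (Ico 0 R) := by
    refine strictAntiOn_of_hasDerivWithinAt_neg (convex_Ico 0 R)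
      (f' := fun t => t ^ 2 * ue t ^ ((3:ℝ)/2) * (B * F - E * A)) ?_ ?_ ?_
    · exact (continuousOn_const.mul ((continuousOn_pow 2).mul
        h.contDiffOn_derivWithin.continuousOn)).add (continuousOn_const.mul
        ((continuousOn_pow 2).mul h.swap.contDiffOn_derivWithin.continuousOn))
    · intro t ht
      rw [interior_Ico] at ht
      refine ((((h.hasDerivAt_sq_mul_derivWithin ht).const_mul A).add
        ((h.swap.hasDerivAt_sq_mul_derivWithin ht).const_mul F)).congr_deriv ?_).hasDerivWithinAt
      ring
    · intro t ht
      rw [interior_Ico] at ht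
      exact mul_neg_of_pos_of_neg (mul_pos (pow_pos ht.1 2)
        (Real.rpow_pos_of_pos (h.pos (Ioo_subset_Ico_self ht)).2 _))
        (sub_neg.2 hBFEA)
  simpa [Z] using hZ ⟨le_rfl, hr.1.trans hr.2⟩ (Ioo_subset_Ico_self hr) hr.1

theorem derivWithin_neg_of_nonneg (h : IsBulkSolOn A B E F α β (Ico 0 R) up ue)
    (hA : 0 < A) (hF : 0 < F) (hBFEA : B * F < E * A) {r : ℝ} (hr : r ∈ Ioo 0 R)
    (hp : 0 ≤ derivWithin up (Ico 0 R) r) : derivWithin ue (Ico 0 R) r < 0 := by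
  have hZ := h.weighted_sq_mul_derivWithin_neg hBFEA hr
  have hr2 : 0 < r ^ 2 := pow_pos hr.1 2
  nlinarith [mul_nonneg (mul_nonneg hA.le hr2.le) hp, mul_pos hF hr2]

theorem monotoneOn_rhs_of_derivWithin_nonneg (h : IsBulkSolOn A B E F α β (Ico 0 R) up ue)
    (hA : 0 < A) (hE : 0 < E) (hF : 0 < F) (hBFEA : B * F < E * A) {a b : ℝ} (ha : 0 ≤ a)
    (hb : b < R)
    (hp : ∀ x ∈ Ioo a b, 0 ≤ derivWithin up (Ico 0 R) x) :
    MonotoneOn (fun r => F * up r ^ ((3:ℝ)/2) - E * ue r ^ ((3:ℝ)/2)) (Icc a b) := by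
  have hsub : Icc a b ⊆ Ico 0 R := fun x hx => ⟨ha.trans hx.1, hx.2.trans_lt hb⟩
  have hsub' : Ioo a b ⊆ Ioo 0 R := fun x hx => ⟨ha.trans_lt hx.1, hx.2.trans hb⟩
  have hup : MonotoneOn up (Icc a b) := by
    refine monotoneOn_of_hasDerivWithinAt_nonneg (f' := derivWithin up (Ico 0 R))
      (convex_Icc a b) (h.1.continuousOn.mono hsub) (fun x hx => ?_) (fun x hx => ?_) <;>
      rw [interior_Icc] at hx
    · exact (h.hasDerivAt (hsub' hx)).hasDerivWithinAt
    · exact hp x hx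
  have hue : AntitoneOn ue (Icc a b) := by
    refine antitoneOn_of_hasDerivWithinAt_nonpos (f' := derivWithin ue (Ico 0 R))
      (convex_Icc a b) (h.2.1.continuousOn.mono hsub) (fun x hx => ?_) (fun x hx => ?_) <;>
      rw [interior_Icc] at hx
    · exact (h.swap.hasDerivAt (hsub' hx)).hasDerivWithinAt
    · exact (h.derivWithin_neg_of_nonneg hA hF hBFEA (hsub' hx) (hp x hx)).le
  intro x hx y hy hxy
  have hpx := (h.pos (hsub hx)).1
  have hey := (h.pos (hsub hy)).2
  have h1 := Real.rpow_le_rpow hpx.le (hup hx hy hxy) (by norm_num : (0:ℝ) ≤ 3 / 2)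
  have h2 := Real.rpow_le_rpow hey.le (hue hx hy hxy) (by norm_num : (0:ℝ) ≤ 3 / 2)
  dsimp only
  nlinarith [mul_le_mul_of_nonneg_left h1 hF.le, mul_le_mul_of_nonneg_left h2 hE.le]

theorem derivWithin_pos_of_pos (h : IsBulkSolOn A B E F α β (Ico 0 R) up ue)
    (hA : 0 < A) (hE : 0 < E) (hF : 0 < F) (hBFEA : B * F < E * A) {R₀ : ℝ}
    (hR₀ : R₀ ∈ Ioo 0 R) (hinc : 0 < derivWithin up (Ico 0 R) R₀) {r : ℝ}
    (hr : r ∈ Ico R₀ R) :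
    0 < derivWithin up (Ico 0 R) r := by
  by_contra! hpr
  have hp0 : derivWithin up (Ico 0 R) 0 = 0 := h.2.2.2.2.1
  have hpc : ContinuousOn (derivWithin up (Ico 0 R)) (Ico 0 R) :=
    h.contDiffOn_derivWithin.continuousOn
  obtain ⟨a, ha, hpa, hpos_a⟩ := exists_nonpos_forall_pos_Ioc hR₀.1.le
    (hpc.mono fun x hx => ⟨hx.1, hx.2.trans_lt hR₀.2⟩) hp0.le hinc
  obtain ⟨b, hb, hpb, hpos_b⟩ := exists_nonpos_forall_pos_Ico hr.1
    (hpc.mono fun x hx => ⟨hR₀.1.le.trans hx.1, hx.2.trans_lt hr.2⟩) hinc hpr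
  have hbR : b < R := hb.2.trans_lt hr.2
  have hp : ∀ x ∈ Ioo a b, 0 ≤ derivWithin up (Ico 0 R) x := fun x hx =>
    (le_or_gt x R₀).elim (fun hxR₀ => (hpos_a x ⟨hx.1, hxR₀⟩).le)
      (fun hxR₀ => (hpos_b x ⟨hxR₀.le, hx.2⟩).le)
  have hbound := le_max_of_hasDerivAt_mul_of_monotoneOn (g := fun r =>
      F * up r ^ ((3:ℝ)/2) - E * ue r ^ ((3:ℝ)/2)) ⟨ha.2.le, hb.1.le⟩
    ((continuousOn_pow 2).mul (hpc.mono fun x hx => ⟨ha.1.trans hx.1, hx.2.trans_lt hbR⟩))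
    (fun t ht => h.hasDerivAt_sq_mul_derivWithin ⟨ha.1.trans_lt ht.1, ht.2.trans hbR⟩)
    (fun t ht => pow_pos (ha.1.trans_lt ht.1) 2)
    ((h.monotoneOn_rhs_of_derivWithin_nonneg hA hE hF hBFEA ha.1 hbR hp).mono Ioo_subset_Icc_self)
  have hXa : a ^ 2 * derivWithin up (Ico 0 R) a ≤ 0 :=
    mul_nonpos_of_nonneg_of_nonpos (sq_nonneg a) hpa
  have hXb : b ^ 2 * derivWithin up (Ico 0 R) b ≤ 0 :=
    mul_nonpos_of_nonneg_of_nonpos (sq_nonneg b) hpb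
  have hX : 0 < R₀ ^ 2 * derivWithin up (Ico 0 R) R₀ := mul_pos (pow_pos hR₀.1 2) hinc
  exact hX.not_ge (hbound.trans (max_le hXa hXb))

end IsBulkSolOn

theorem stmt14_general (A B E F : ℝ) (hA : 0 < A) (hB : 0 < B) (hE : 0 < E) (hF : 0 < F)
    (hBFEA : B * F < E * A)
    (α β R₁ : ℝ)
    (up ue : ℝ → ℝ) (hsol : IsBulkSolOn A B E F α β (Ico 0 R₁) up ue)
    (R₀ : ℝ) (hR₀ : R₀ ∈ Ioo 0 R₁) :
    (0 < derivWithin up (Ico 0 R₁) R₀ →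
      ∀ r ∈ Ico R₀ R₁,
        0 ≤ derivWithin up (Ico 0 R₁) r ∧ derivWithin ue (Ico 0 R₁) r ≤ 0) ∧
    (0 < derivWithin ue (Ico 0 R₁) R₀ →
      ∀ r ∈ Ico R₀ R₁,
        0 ≤ derivWithin ue (Ico 0 R₁) r ∧ derivWithin up (Ico 0 R₁) r ≤ 0) := by
  have hBFEA' : F * B < A * E := by linarith [mul_comm B F, mul_comm E A]
  refine ⟨fun hinc r hr => ?_, fun hinc r hr => ?_⟩
  · have hp := hsol.derivWithin_pos_of_pos hA hE hF hBFEA hR₀ hinc hr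
    exact ⟨hp.le, (hsol.derivWithin_neg_of_nonneg hA hF hBFEA
      ⟨hR₀.1.trans_le hr.1, hr.2⟩ hp.le).le⟩
  · have he := hsol.swap.derivWithin_pos_of_pos hE hA hB hBFEA' hR₀ hinc hr
    exact ⟨he.le, (hsol.swap.derivWithin_neg_of_nonneg hE hB hBFEA'
      ⟨hR₀.1.trans_le hr.1, hr.2⟩ he.le).le⟩

/-- Lemma 5.7: once one density starts increasing, it stays nondecreasing and the
other density stays nonincreasing (on the interval of positivity). In particular both
densities cannot be simultaneously increasing. -/
theorem stmt14 (A B E F : ℝ) (hA : 0 < A) (hB : 0 < B) (hE : 0 < E) (hF : 0 < F)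
    (hEF : F < E) (hAB : B < A) (hBFEA : B * F < E * A)
    (α β R₁ : ℝ) (hα : 0 < α) (hβ : 0 < β) (hR₁ : 0 < R₁)
    (up ue : ℝ → ℝ) (hsol : IsBulkSolOn A B E F α β (Ico 0 R₁) up ue)
    (hφ : F * α ^ ((3:ℝ)/2) - E * β ^ ((3:ℝ)/2) < 0)
    (hψ : B * β ^ ((3:ℝ)/2) - A * α ^ ((3:ℝ)/2) < 0)
    (R₀ : ℝ) (hR₀ : R₀ ∈ Ioo 0 R₁) :
    (0 < derivWithin up (Ico 0 R₁) R₀ →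
      ∀ r ∈ Ico R₀ R₁,
        0 ≤ derivWithin up (Ico 0 R₁) r ∧ derivWithin ue (Ico 0 R₁) r ≤ 0) ∧
    (0 < derivWithin ue (Ico 0 R₁) R₀ →
      ∀ r ∈ Ico R₀ R₁,
        0 ≤ derivWithin ue (Ico 0 R₁) r ∧ derivWithin up (Ico 0 R₁) r ≤ 0) :=
  stmt14_general A B E F hA hB hE hF hBFEA α β R₁ up ue hsol R₀ hR₀
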